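/- Let n ≥ 2 be an integer and let g, h : ℝ → ℝ be n-times continuously differentiable functions with h(g(t)) = t for all t ∈ ℝ. Then for every t ∈ ℝ with g'(t) ≠ 0: h^{(n)}(g(t)) = −(g'(t))^{−n} · ∑_π h^{(|π|)}(g(t)) · ∏_{P ∈ π} g^{(|P|)}(t), where the sum runs over all set partitions π of {1, …, n} other than the partition into n singleton blocks, |π| denotes the number of blocks of π, and |P| denotes the cardinality of a block P. -/

import Mathlib

open Finset

def isPart {n : ℕ} (π : Finset (Finset (Fin n))) : Prop :=
  (∀ P ∈ π, P.Nonempty) ∧ (∀ P ∈ π, ∀ Q ∈ π, P ≠ Q → Disjoint P Q) ∧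
    (∀ i : Fin n, ∃ P ∈ π, i ∈ P)

open Classical in
noncomputable def parts (n : ℕ) : Finset (Finset (Finset (Fin n))) :=
  Finset.univ.filter isPart

lemma mem_parts {n : ℕ} {π : Finset (Finset (Fin n))} : π ∈ parts n ↔ isPart π := by
  simp [parts]

def up {n : ℕ} (Q : Finset (Fin n)) : Finset (Fin (n + 1)) := Q.image Fin.castSucc

lemma up_injective {n : ℕ} : Function.Injective (up (n := n)) :=
  Finset.image_injective (Fin.castSucc_injective n)

lemma last_not_mem_up {n : ℕ} (Q : Finset (Fin n)) : Fin.last n ∉ up Q := by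
  simp only [up, mem_image, not_exists]
  rintro i ⟨_, hi⟩
  exact absurd hi (Fin.castSucc_lt_last i).ne

lemma card_up {n : ℕ} (Q : Finset (Fin n)) : (up Q).card = Q.card :=
  Finset.card_image_of_injective _ (Fin.castSucc_injective n)

lemma up_nonempty {n : ℕ} {Q : Finset (Fin n)} (hQ : Q.Nonempty) : (up Q).Nonempty :=
  hQ.image _

def downQ {n : ℕ} (Q : Finset (Fin (n + 1))) : Finset (Fin n) :=
  Finset.univ.filter (fun i => i.castSucc ∈ Q)

lemma mem_downQ {n : ℕ} {Q : Finset (Fin (n + 1))} {i : Fin n} :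
    i ∈ downQ Q ↔ i.castSucc ∈ Q := by simp [downQ]

lemma downQ_up {n : ℕ} (Q : Finset (Fin n)) : downQ (up Q) = Q := by
  ext i
  simp [mem_downQ, up, Fin.castSucc_inj]

lemma downQ_insert_last {n : ℕ} (Q : Finset (Fin n)) :
    downQ (insert (Fin.last n) (up Q)) = Q := by
  ext i
  simp [mem_downQ, up, Fin.castSucc_inj, (Fin.castSucc_lt_last i).ne]

lemma up_downQ {n : ℕ} (Q : Finset (Fin (n + 1))) : up (downQ Q) = Q.erase (Fin.last n) := by
  ext x
  simp only [up, mem_image, mem_downQ, mem_erase]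
  constructor
  · rintro ⟨i, hi, rfl⟩
    exact ⟨(Fin.castSucc_lt_last i).ne, hi⟩
  · rintro ⟨hx, hxQ⟩
    exact ⟨x.castPred hx, by rwa [Fin.castSucc_castPred], Fin.castSucc_castPred _ _⟩

def insNone {n : ℕ} (π : Finset (Finset (Fin n))) : Finset (Finset (Fin (n + 1))) :=
  insert {Fin.last n} (π.image up)

def insSome {n : ℕ} (π : Finset (Finset (Fin n))) (P : Finset (Fin n)) :
    Finset (Finset (Fin (n + 1))) :=
  insert (insert (Fin.last n) (up P)) ((π.erase P).image up)

noncomputable def upMap {n : ℕ} (π : Finset (Finset (Fin n))) (o : Finset (Fin n)) :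
    Finset (Finset (Fin (n + 1))) :=
  if o = ∅ then insNone π else insSome π o

lemma insNone_mem {n : ℕ} {π : Finset (Finset (Fin n))} (hπ : isPart π) :
    isPart (insNone π) := by
  obtain ⟨h1, h2, h3⟩ := hπ
  refine ⟨?_, ?_, ?_⟩
  · intro P hP
    rcases Finset.mem_insert.1 hP with rfl | hP
    · exact ⟨_, Finset.mem_singleton_self _⟩
    · rcases Finset.mem_image.1 hP with ⟨Q, hQ, rfl⟩
      exact up_nonempty (h1 Q hQ)
  · intro P hP Q hQ hPQ
    rcases Finset.mem_insert.1 hP with rfl | hP <;> rcases Finset.mem_insert.1 hQ with rfl | hQ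
    · exact absurd rfl hPQ
    · rcases Finset.mem_image.1 hQ with ⟨Q', _, rfl⟩
      simpa using last_not_mem_up Q'
    · rcases Finset.mem_image.1 hP with ⟨P', _, rfl⟩
      simpa [disjoint_comm] using last_not_mem_up P'
    · rcases Finset.mem_image.1 hP with ⟨P', hP', rfl⟩
      rcases Finset.mem_image.1 hQ with ⟨Q', hQ', rfl⟩
      exact (Finset.disjoint_image (Fin.castSucc_injective n)).2
        (h2 P' hP' Q' hQ' (fun e => hPQ (by rw [e])))
  · intro i
    rcases eq_or_ne i (Fin.last n) with rfl | hi
    · exact ⟨_, Finset.mem_insert_self _ _, Finset.mem_singleton_self _⟩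
    · obtain ⟨P, hP, hiP⟩ := h3 (i.castPred hi)
      refine ⟨up P, Finset.mem_insert_of_mem (Finset.mem_image_of_mem _ hP), ?_⟩
      simpa [up] using ⟨i.castPred hi, hiP, Fin.castSucc_castPred _ _⟩

lemma insSome_mem {n : ℕ} {π : Finset (Finset (Fin n))} (hπ : isPart π)
    {P : Finset (Fin n)} (hP : P ∈ π) : isPart (insSome π P) := by
  obtain ⟨h1, h2, h3⟩ := hπ
  refine ⟨?_, ?_, ?_⟩
  · intro B hB
    rcases Finset.mem_insert.1 hB with rfl | hB
    · exact ⟨_, Finset.mem_insert_self _ _⟩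
    · rcases Finset.mem_image.1 hB with ⟨Q, hQ, rfl⟩
      exact up_nonempty (h1 Q (Finset.mem_of_mem_erase hQ))
  · have key : ∀ Q ∈ (π.erase P).image up,
        Disjoint (insert (Fin.last n) (up P)) Q := by
      intro Q hQ
      rcases Finset.mem_image.1 hQ with ⟨Q', hQ', rfl⟩
      rw [Finset.disjoint_insert_left]
      refine ⟨last_not_mem_up Q', (Finset.disjoint_image (Fin.castSucc_injective n)).2 ?_⟩
      exact h2 P hP Q' (Finset.mem_of_mem_erase hQ') (Finset.ne_of_mem_erase hQ').symm
    intro B hB Q hQ hBQ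
    rcases Finset.mem_insert.1 hB with rfl | hB <;> rcases Finset.mem_insert.1 hQ with rfl | hQ
    · exact absurd rfl hBQ
    · exact key Q hQ
    · exact (key B hB).symm
    · rcases Finset.mem_image.1 hB with ⟨B', hB', rfl⟩
      rcases Finset.mem_image.1 hQ with ⟨Q', hQ', rfl⟩
      exact (Finset.disjoint_image (Fin.castSucc_injective n)).2
        (h2 B' (Finset.mem_of_mem_erase hB') Q' (Finset.mem_of_mem_erase hQ')
          (fun e => hBQ (by rw [e])))
  · intro i
    rcases eq_or_ne i (Fin.last n) with rfl | hi
    · exact ⟨_, Finset.mem_insert_self _ _, Finset.mem_insert_self _ _⟩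
    · obtain ⟨Q, hQ, hiQ⟩ := h3 (i.castPred hi)
      have hmem : i ∈ up Q := by
        simpa [up] using ⟨i.castPred hi, hiQ, Fin.castSucc_castPred _ _⟩
      rcases eq_or_ne Q P with rfl | hQP
      · exact ⟨_, Finset.mem_insert_self _ _, Finset.mem_insert_of_mem hmem⟩
      · exact ⟨up Q, Finset.mem_insert_of_mem
          (Finset.mem_image_of_mem _ (Finset.mem_erase.2 ⟨hQP, hQ⟩)), hmem⟩

noncomputable def down {n : ℕ} (σ : Finset (Finset (Fin (n + 1)))) :
    Finset (Finset (Fin n)) := (σ.image downQ).erase ∅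

noncomputable def blockLast {n : ℕ} (σ : Finset (Finset (Fin (n + 1)))) :
    Finset (Fin (n + 1)) := (σ.filter (fun Q => Fin.last n ∈ Q)).biUnion id

noncomputable def downO {n : ℕ} (σ : Finset (Finset (Fin (n + 1)))) : Finset (Fin n) :=
  downQ (blockLast σ)

/-- If `B₀ ∈ σ` contains `last` and blocks are pairwise disjoint, `blockLast σ = B₀`. -/
lemma blockLast_eq {n : ℕ} {σ : Finset (Finset (Fin (n + 1)))}
    (h2 : ∀ P ∈ σ, ∀ Q ∈ σ, P ≠ Q → Disjoint P Q)
    {B₀ : Finset (Fin (n + 1))} (hB₀ : B₀ ∈ σ) (hlast : Fin.last n ∈ B₀) :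
    blockLast σ = B₀ := by
  have : σ.filter (fun Q => Fin.last n ∈ Q) = {B₀} := by
    ext Q
    simp only [Finset.mem_filter, Finset.mem_singleton]
    constructor
    · rintro ⟨hQ, hlQ⟩
      by_contra hne
      exact Finset.disjoint_left.1 (h2 Q hQ B₀ hB₀ hne) hlQ hlast
    · rintro rfl; exact ⟨hB₀, hlast⟩
  rw [blockLast, this]
  simp

lemma down_mem {n : ℕ} {σ : Finset (Finset (Fin (n + 1)))} (hσ : isPart σ) :
    isPart (down σ) := by
  obtain ⟨h1, h2, h3⟩ := hσ
  refine ⟨?_, ?_, ?_⟩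
  · intro P hP
    rw [down, Finset.mem_erase] at hP
    exact Finset.nonempty_of_ne_empty hP.1
  · intro P hP Q hQ hPQ
    rw [down, Finset.mem_erase] at hP hQ
    rcases Finset.mem_image.1 hP.2 with ⟨B, hB, rfl⟩
    rcases Finset.mem_image.1 hQ.2 with ⟨B', hB', rfl⟩
    have hBne : B ≠ B' := fun e => hPQ (by rw [e])
    rw [Finset.disjoint_left]
    intro i hi hi'
    exact Finset.disjoint_left.1 (h2 B hB B' hB' hBne) (mem_downQ.1 hi) (mem_downQ.1 hi')
  · intro i
    obtain ⟨B, hB, hiB⟩ := h3 i.castSucc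
    refine ⟨downQ B, ?_, mem_downQ.2 hiB⟩
    rw [down, Finset.mem_erase]
    exact ⟨Finset.ne_empty_of_mem (mem_downQ.2 hiB), Finset.mem_image_of_mem _ hB⟩

lemma downO_mem {n : ℕ} {σ : Finset (Finset (Fin (n + 1)))} (hσ : isPart σ) :
    downO σ ∈ insert ∅ (down σ) := by
  obtain ⟨B₀, hB₀, hlast⟩ := hσ.2.2 (Fin.last n)
  rw [downO, blockLast_eq hσ.2.1 hB₀ hlast]
  rcases eq_or_ne (downQ B₀) ∅ with he | he
  · simp [he]
  · refine Finset.mem_insert_of_mem ?_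
    rw [down, Finset.mem_erase]
    exact ⟨he, Finset.mem_image_of_mem _ hB₀⟩

lemma empty_not_mem {n : ℕ} {π : Finset (Finset (Fin n))} (hπ : isPart π) : ∅ ∉ π :=
  fun h => by simpa using hπ.1 ∅ h

lemma down_insNone {n : ℕ} {π : Finset (Finset (Fin n))} (hπ : isPart π) :
    down (insNone π) = π := by
  have h1 : downQ ({Fin.last n} : Finset (Fin (n + 1))) = ∅ := by
    ext i; simp [mem_downQ, (Fin.castSucc_lt_last i).ne]
  rw [down, insNone, Finset.image_insert, h1, Finset.image_image]
  have h2 : π.image (downQ ∘ up) = π := by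
    rw [show downQ ∘ up = id from funext (fun Q => downQ_up (n := n) Q), Finset.image_id]
  rw [h2, Finset.erase_insert (empty_not_mem hπ)]

lemma downO_insNone {n : ℕ} {π : Finset (Finset (Fin n))} (hπ : isPart π) :
    downO (insNone π) = ∅ := by
  rw [downO, blockLast_eq (insNone_mem hπ).2.1 (Finset.mem_insert_self _ _)
    (Finset.mem_singleton_self _)]
  ext i; simp [mem_downQ, (Fin.castSucc_lt_last i).ne]

lemma down_insSome {n : ℕ} {π : Finset (Finset (Fin n))} (hπ : isPart π)
    {P : Finset (Fin n)} (hP : P ∈ π) : down (insSome π P) = π := by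
  rw [down, insSome, Finset.image_insert, downQ_insert_last, Finset.image_image]
  have h2 : (π.erase P).image (downQ ∘ up) = π.erase P := by
    rw [show downQ ∘ up = id from funext (fun Q => downQ_up (n := n) Q), Finset.image_id]
  rw [h2, Finset.insert_erase hP, Finset.erase_eq_of_notMem (empty_not_mem hπ)]

lemma downO_insSome {n : ℕ} {π : Finset (Finset (Fin n))} (hπ : isPart π)
    {P : Finset (Fin n)} (hP : P ∈ π) : downO (insSome π P) = P := by
  rw [downO, blockLast_eq (insSome_mem hπ hP).2.1 (Finset.mem_insert_self _ _)
    (Finset.mem_insert_self _ _), downQ_insert_last]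

lemma last_not_mem_other {n : ℕ} {σ : Finset (Finset (Fin (n + 1)))} (hσ : isPart σ)
    {B₀ B : Finset (Fin (n + 1))} (hB₀ : B₀ ∈ σ) (hlast : Fin.last n ∈ B₀)
    (hB : B ∈ σ) (hne : B ≠ B₀) : Fin.last n ∉ B :=
  fun hl => Finset.disjoint_left.1 (hσ.2.1 B hB B₀ hB₀ hne) hl hlast

lemma downQ_block {n : ℕ} {σ : Finset (Finset (Fin (n + 1)))} (hσ : isPart σ)
    {B₀ B : Finset (Fin (n + 1))} (hB₀ : B₀ ∈ σ) (hlast : Fin.last n ∈ B₀)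
    (hB : B ∈ σ) (hne : B ≠ B₀) : downQ B ≠ ∅ ∧ up (downQ B) = B := by
  have hl := last_not_mem_other hσ hB₀ hlast hB hne
  constructor
  · obtain ⟨x, hx⟩ := hσ.1 B hB
    have hxl : x ≠ Fin.last n := fun e => hl (e ▸ hx)
    exact Finset.ne_empty_of_mem (mem_downQ.2 (by rwa [Fin.castSucc_castPred x hxl]))
  · rw [up_downQ, Finset.erase_eq_of_notMem hl]

lemma upMap_down {n : ℕ} {σ : Finset (Finset (Fin (n + 1)))} (hσ : isPart σ) :
    upMap (down σ) (downO σ) = σ := by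
  obtain ⟨B₀, hB₀, hlast⟩ := hσ.2.2 (Fin.last n)
  have hBL : blockLast σ = B₀ := blockLast_eq hσ.2.1 hB₀ hlast
  rw [downO, hBL]
  rcases eq_or_ne (downQ B₀) ∅ with he | he
  · -- B₀ = {last}
    have hB₀eq : B₀ = {Fin.last n} := by
      have h1 : B₀.erase (Fin.last n) = ∅ := by rw [← up_downQ, he]; simp [up]
      have := Finset.insert_erase hlast
      rw [h1] at this
      exact this.symm
    rw [he, upMap, if_pos rfl, insNone]
    have himg : (down σ).image up = σ.erase B₀ := by
      ext X
      simp only [down, Finset.mem_image, Finset.mem_erase]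
      constructor
      · rintro ⟨Y, ⟨hYne, hY⟩, rfl⟩
        rcases hY with ⟨B, hB, rfl⟩
        have hne : B ≠ B₀ := fun e => hYne (by rw [e, he])
        rw [(downQ_block hσ hB₀ hlast hB hne).2]
        exact ⟨hne, hB⟩
      · rintro ⟨hne, hX⟩
        obtain ⟨hne', hup⟩ := downQ_block hσ hB₀ hlast hX hne
        exact ⟨downQ X, ⟨hne', X, hX, rfl⟩, hup⟩
    rw [himg, ← hB₀eq, Finset.insert_erase hB₀]
  · rw [upMap, if_neg he, insSome]
    have hnew : insert (Fin.last n) (up (downQ B₀)) = B₀ := by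
      rw [up_downQ, Finset.insert_erase hlast]
    have himg : ((down σ).erase (downQ B₀)).image up = σ.erase B₀ := by
      ext X
      simp only [down, Finset.mem_image, Finset.mem_erase]
      constructor
      · rintro ⟨Y, ⟨hYB₀, hYne, hY⟩, rfl⟩
        rcases hY with ⟨B, hB, rfl⟩
        have hne : B ≠ B₀ := fun e => hYB₀ (by rw [e])
        rw [(downQ_block hσ hB₀ hlast hB hne).2]
        exact ⟨hne, hB⟩
      · rintro ⟨hne, hX⟩
        obtain ⟨hne', hup⟩ := downQ_block hσ hB₀ hlast hX hne
        refine ⟨downQ X, ⟨?_, hne', X, hX, rfl⟩, hup⟩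
        intro hdq
        obtain ⟨x, hx⟩ := Finset.nonempty_of_ne_empty he
        have hx' : x ∈ downQ X := by rw [hdq]; exact hx
        exact Finset.disjoint_left.1 (hσ.2.1 X hX B₀ hB₀ hne)
          (mem_downQ.1 hx') (mem_downQ.1 hx)
    rw [himg, hnew, Finset.insert_erase hB₀]

lemma upMap_empty {n : ℕ} (π : Finset (Finset (Fin n))) : upMap π ∅ = insNone π := if_pos rfl

lemma upMap_ne {n : ℕ} (π : Finset (Finset (Fin n))) {o : Finset (Fin n)} (h : o ≠ ∅) :
    upMap π o = insSome π o := if_neg h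

lemma key_sum {n : ℕ} (f : Finset (Finset (Fin (n + 1))) → ℝ) :
    ∑ σ ∈ parts (n + 1), f σ =
      ∑ π ∈ parts n, (f (insNone π) + ∑ P ∈ π, f (insSome π P)) := by
  have step1 : ∀ π ∈ parts n,
      f (insNone π) + ∑ P ∈ π, f (insSome π P) = ∑ o ∈ insert ∅ π, f (upMap π o) := by
    intro π hπ
    rw [Finset.sum_insert (empty_not_mem (mem_parts.1 hπ))]
    refine congrArg₂ (· + ·) ?_ (Finset.sum_congr rfl (fun P hP => ?_))
    · rw [upMap_empty]
    · rw [upMap_ne _ (Finset.nonempty_iff_ne_empty.1 ((mem_parts.1 hπ).1 P hP))]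
  rw [Finset.sum_congr rfl step1, Finset.sum_sigma']
  refine Finset.sum_nbij' (i := fun σ => ⟨down σ, downO σ⟩)
    (j := fun x => upMap x.1 x.2) ?_ ?_ ?_ ?_ ?_
  · intro σ hσ
    rw [Finset.mem_sigma]
    exact ⟨mem_parts.2 (down_mem (mem_parts.1 hσ)), downO_mem (mem_parts.1 hσ)⟩
  · rintro ⟨π, o⟩ hx
    rw [Finset.mem_sigma] at hx
    obtain ⟨hπ, ho⟩ := hx
    dsimp only at hπ ho ⊢
    have hπ' := mem_parts.1 hπ
    rcases eq_or_ne o ∅ with rfl | hne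
    · rw [upMap_empty]; exact mem_parts.2 (insNone_mem hπ')
    · rw [upMap_ne _ hne]
      exact mem_parts.2 (insSome_mem hπ' ((Finset.mem_insert.1 ho).resolve_left hne))
  · intro σ hσ
    exact upMap_down (mem_parts.1 hσ)
  · rintro ⟨π, o⟩ hx
    rw [Finset.mem_sigma] at hx
    obtain ⟨hπ, ho⟩ := hx
    dsimp only at hπ ho ⊢
    have hπ' := mem_parts.1 hπ
    rcases eq_or_ne o ∅ with rfl | hne
    · rw [upMap_empty, down_insNone hπ', downO_insNone hπ']
    · have hoπ := (Finset.mem_insert.1 ho).resolve_left hne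
      rw [upMap_ne _ hne, down_insSome hπ' hoπ, downO_insSome hπ' hoπ]
  · intro σ hσ
    rw [upMap_down (mem_parts.1 hσ)]

lemma sum_card_parts {n : ℕ} {π : Finset (Finset (Fin n))} (hπ : isPart π) :
    ∑ P ∈ π, P.card = n := by
  have hcov : π.biUnion id = Finset.univ := by
    ext i
    simp only [Finset.mem_biUnion, id, Finset.mem_univ, iff_true]
    exact hπ.2.2 i
  calc ∑ P ∈ π, P.card = (π.biUnion id).card := (Finset.card_biUnion hπ.2.1).symm
    _ = n := by rw [hcov]; simp

lemma card_parts_le {n : ℕ} {π : Finset (Finset (Fin n))} (hπ : isPart π) : π.card ≤ n := by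
  calc π.card = ∑ _P ∈ π, 1 := by simp
    _ ≤ ∑ P ∈ π, P.card := Finset.sum_le_sum (fun P hP => (hπ.1 P hP).card_pos)
    _ = n := sum_card_parts hπ

lemma block_card_le {n : ℕ} {π : Finset (Finset (Fin n))} (hπ : isPart π)
    {P : Finset (Fin n)} (hP : P ∈ π) : P.card ≤ n :=
  (Finset.single_le_sum (fun Q _ => Nat.zero_le Q.card) hP).trans (sum_card_parts hπ).le

lemma card_insNone {n : ℕ} {π : Finset (Finset (Fin n))} :
    (insNone π).card = π.card + 1 := by
  rw [insNone, Finset.card_insert_of_notMem, Finset.card_image_of_injective _ up_injective]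
  simp only [Finset.mem_image, not_exists]
  rintro Q ⟨hQ, hQe⟩
  exact last_not_mem_up Q (hQe ▸ Finset.mem_singleton_self _)

lemma card_insSome {n : ℕ} {π : Finset (Finset (Fin n))} {P : Finset (Fin n)} (hP : P ∈ π) :
    (insSome π P).card = π.card := by
  rw [insSome, Finset.card_insert_of_notMem, Finset.card_image_of_injective _ up_injective,
    Finset.card_erase_of_mem hP, Nat.sub_add_cancel (Finset.card_pos.2 ⟨P, hP⟩)]
  simp only [Finset.mem_image, not_exists]
  rintro Q ⟨hQ, hQe⟩
  exact last_not_mem_up Q (hQe ▸ Finset.mem_insert_self _ _)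

lemma prod_insNone {n : ℕ} {π : Finset (Finset (Fin n))} (v : ℕ → ℝ) :
    ∏ B ∈ insNone π, v B.card = v 1 * ∏ P ∈ π, v P.card := by
  rw [insNone, Finset.prod_insert, Finset.prod_image]
  · simp only [card_up, Finset.card_singleton]
  · intro x _ y _ hxy; exact up_injective hxy
  · simp only [Finset.mem_image, not_exists]
    rintro Q ⟨hQ, hQe⟩
    exact last_not_mem_up Q (hQe ▸ Finset.mem_singleton_self _)

lemma prod_insSome {n : ℕ} {π : Finset (Finset (Fin n))} {P : Finset (Fin n)} (v : ℕ → ℝ) :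
    ∏ B ∈ insSome π P, v B.card = v (P.card + 1) * ∏ Q ∈ π.erase P, v Q.card := by
  rw [insSome, Finset.prod_insert, Finset.prod_image]
  · rw [Finset.card_insert_of_notMem (last_not_mem_up P), card_up]
    simp only [card_up]
  · intro x _ y _ hxy; exact up_injective hxy
  · simp only [Finset.mem_image, not_exists]
    rintro Q ⟨hQ, hQe⟩
    exact last_not_mem_up Q (hQe ▸ Finset.mem_insert_self _ _)

lemma parts_zero : parts 0 = {∅} := by
  ext π
  rw [mem_parts, Finset.mem_singleton]
  revert π
  simp only [isPart]
  decide

lemma faa (n : ℕ) (g h : ℝ → ℝ) (hg : ContDiff ℝ (n : ℕ∞) g) (hh : ContDiff ℝ (n : ℕ∞) h)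
    (t : ℝ) :
    iteratedDeriv n (fun s => h (g s)) t =
      ∑ π ∈ parts n, iteratedDeriv π.card h (g t) * ∏ P ∈ π, iteratedDeriv P.card g t := by
  induction n generalizing t with
  | zero => simp [parts_zero]
  | succ k ih =>
    have hle : ((k : ℕ∞) : WithTop ℕ∞) ≤ (((k + 1 : ℕ) : ℕ∞) : WithTop ℕ∞) := by
      exact_mod_cast Nat.le_succ k
    have hIH : iteratedDeriv k (fun s => h (g s)) = fun s =>
        ∑ π ∈ parts k, iteratedDeriv π.card h (g s) * ∏ P ∈ π, iteratedDeriv P.card g s :=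
      funext (ih (hg.of_le hle) (hh.of_le hle))
    rw [iteratedDeriv_succ, hIH]
    have hg1 : HasDerivAt g (deriv g t) t :=
      ((hg.differentiable (by simp)) t).hasDerivAt
    have hD : ∀ m : ℕ, m ≤ k → ∀ x : ℝ,
        HasDerivAt (iteratedDeriv m h) (iteratedDeriv (m + 1) h x) x := by
      intro m hm x
      have hd := hh.differentiable_iteratedDeriv m
        (by exact_mod_cast Nat.lt_succ_of_le hm)
      have := (hd x).hasDerivAt
      rwa [show deriv (iteratedDeriv m h) x = iteratedDeriv (m + 1) h x from
        by rw [iteratedDeriv_succ]] at this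
    have hDg : ∀ m : ℕ, m ≤ k → ∀ x : ℝ,
        HasDerivAt (iteratedDeriv m g) (iteratedDeriv (m + 1) g x) x := by
      intro m hm x
      have hd := hg.differentiable_iteratedDeriv m
        (by exact_mod_cast Nat.lt_succ_of_le hm)
      have := (hd x).hasDerivAt
      rwa [show deriv (iteratedDeriv m g) x = iteratedDeriv (m + 1) g x from
        by rw [iteratedDeriv_succ]] at this
    have hterm : ∀ π ∈ parts k,
        HasDerivAt (fun s => iteratedDeriv π.card h (g s) * ∏ P ∈ π, iteratedDeriv P.card g s)
          ((iteratedDeriv (π.card + 1) h (g t) * deriv g t) *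
              (∏ P ∈ π, iteratedDeriv P.card g t) +
            iteratedDeriv π.card h (g t) *
              ∑ P ∈ π, (∏ Q ∈ π.erase P, iteratedDeriv Q.card g t) •
                iteratedDeriv (P.card + 1) g t) t := by
      intro π hπ
      have hπ' := mem_parts.1 hπ
      have hH : HasDerivAt (fun s => iteratedDeriv π.card h (g s))
          (iteratedDeriv (π.card + 1) h (g t) * deriv g t) t :=
        (hD π.card (card_parts_le hπ') (g t)).comp t hg1
      have hG : HasDerivAt (fun s => ∏ P ∈ π, iteratedDeriv P.card g s)
          (∑ P ∈ π, (∏ Q ∈ π.erase P, iteratedDeriv Q.card g t) •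
            iteratedDeriv (P.card + 1) g t) t :=
        HasDerivAt.fun_finsetProd (fun P hP => hDg P.card (block_card_le hπ' hP) t)
      exact hH.mul hG
    rw [(HasDerivAt.fun_sum hterm).deriv, key_sum]
    refine Finset.sum_congr rfl (fun π hπ => ?_)
    have hπ' := mem_parts.1 hπ
    rw [card_insNone, prod_insNone (fun m => iteratedDeriv m g t), iteratedDeriv_one,
      Finset.mul_sum]
    refine congrArg₂ (· + ·) (by ring) (Finset.sum_congr rfl (fun P hP => ?_))
    rw [card_insSome hP, prod_insSome (fun m => iteratedDeriv m g t), smul_eq_mul]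
    ring

lemma iter_const : ∀ (j : ℕ) (c : ℝ), iteratedDeriv (j + 1) (fun _ : ℝ => c) = fun _ => 0 := by
  intro j
  induction j with
  | zero => intro c; rw [iteratedDeriv_one]; exact deriv_const' c
  | succ m ih =>
    intro c
    rw [iteratedDeriv_succ', deriv_const' c, ih 0]

def singPart (n : ℕ) : Finset (Finset (Fin n)) :=
  Finset.univ.image (fun i => ({i} : Finset (Fin n)))

lemma filter_not_eq {n : ℕ} :
    (parts n).filter (fun π => ¬ ∃ P ∈ π, 2 ≤ P.card) = {singPart n} := by
  classical
  ext π
  simp only [Finset.mem_filter, Finset.mem_singleton, mem_parts]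
  constructor
  · rintro ⟨⟨h1, h2, h3⟩, hno⟩
    have hsingle : ∀ P ∈ π, ∃ i, P = {i} := by
      intro P hP
      have hc1 : P.card = 1 := by
        have := (h1 P hP).card_pos
        by_contra hc
        exact hno ⟨P, hP, by omega⟩
      obtain ⟨i, hi⟩ := Finset.card_eq_one.1 hc1
      exact ⟨i, hi⟩
    ext B
    simp only [singPart, Finset.mem_image, Finset.mem_univ, true_and]
    constructor
    · intro hB
      obtain ⟨i, rfl⟩ := hsingle B hB
      exact ⟨i, rfl⟩
    · rintro ⟨i, rfl⟩
      obtain ⟨P, hP, hiP⟩ := h3 i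
      obtain ⟨j, rfl⟩ := hsingle P hP
      rw [Finset.mem_singleton] at hiP
      subst hiP
      exact hP
  · rintro rfl
    refine ⟨⟨?_, ?_, ?_⟩, ?_⟩
    · intro P hP
      obtain ⟨i, _, rfl⟩ := Finset.mem_image.1 hP
      exact ⟨i, Finset.mem_singleton_self i⟩
    · intro P hP Q hQ hPQ
      obtain ⟨i, _, rfl⟩ := Finset.mem_image.1 hP
      obtain ⟨j, _, rfl⟩ := Finset.mem_image.1 hQ
      simp only [Finset.disjoint_singleton_left, Finset.mem_singleton]
      exact fun e => hPQ (by rw [e])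
    · intro i
      exact ⟨{i}, Finset.mem_image_of_mem _ (Finset.mem_univ i), Finset.mem_singleton_self i⟩
    · rintro ⟨P, hP, hc⟩
      obtain ⟨i, _, rfl⟩ := Finset.mem_image.1 hP
      simp at hc

lemma card_singPart (n : ℕ) : (singPart n).card = n := by
  rw [singPart, Finset.card_image_of_injective _ (fun i j e => by
    simpa using (Finset.singleton_injective e))]
  simp

lemma prod_singPart {n : ℕ} (v : ℕ → ℝ) :
    ∏ B ∈ singPart n, v B.card = (v 1) ^ n := by
  rw [singPart, Finset.prod_image (fun i _ j _ e => Finset.singleton_injective e)]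
  simp

open Classical in
/-- Faà di Bruno formula for the derivatives of an inverse function: if
`h(g(t)) = t` and `g'(t) ≠ 0`, then for `n ≥ 2`,
`h^{(n)}(g(t)) = −(g'(t))^{−n} ∑_π h^{(|π|)}(g(t)) ∏_{P ∈ π} g^{(|P|)}(t)`,
the sum running over all set partitions `π` of `{1, …, n}` other than the
partition into `n` singletons. -/
theorem statement18 (n : ℕ) (hn : 2 ≤ n) (g h : ℝ → ℝ)
    (hg : ContDiff ℝ (n : ℕ∞) g) (hh : ContDiff ℝ (n : ℕ∞) h)
    (hinv : ∀ t : ℝ, h (g t) = t) (t : ℝ) (hgt : deriv g t ≠ 0) :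
    iteratedDeriv n h (g t) =
      -(deriv g t) ^ (-(n : ℤ)) *
        ∑ π ∈ (Finset.univ : Finset (Finset (Finset (Fin n)))).filter
            (fun π => (∀ P ∈ π, P.Nonempty) ∧
              (∀ P ∈ π, ∀ Q ∈ π, P ≠ Q → Disjoint P Q) ∧
              (∀ i : Fin n, ∃ P ∈ π, i ∈ P) ∧
              (∃ P ∈ π, 2 ≤ P.card)),
          iteratedDeriv π.card h (g t) * ∏ P ∈ π, iteratedDeriv P.card g t := by
  classical
  have hzero : (0 : ℝ) = ∑ π ∈ parts n,
      iteratedDeriv π.card h (g t) * ∏ P ∈ π, iteratedDeriv P.card g t := by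
    have hcomp : (fun s => h (g s)) = fun s : ℝ => s := funext hinv
    obtain ⟨m, hm⟩ : ∃ m, n = m + 2 := ⟨n - 2, by omega⟩
    have h0 : iteratedDeriv n (fun s => h (g s)) t = 0 := by
      rw [hcomp, hm, show m + 2 = (m + 1) + 1 from rfl, iteratedDeriv_succ',
        show deriv (fun s : ℝ => s) = fun _ => (1 : ℝ) from funext (fun x => by simp),
        iter_const]
    rw [← faa n g h hg hh t, h0]
  have hsplit : ∑ π ∈ (parts n).filter (fun π => ∃ P ∈ π, 2 ≤ P.card),
        (iteratedDeriv π.card h (g t) * ∏ P ∈ π, iteratedDeriv P.card g t) +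
      ∑ π ∈ (parts n).filter (fun π => ¬ ∃ P ∈ π, 2 ≤ P.card),
        (iteratedDeriv π.card h (g t) * ∏ P ∈ π, iteratedDeriv P.card g t) =
      ∑ π ∈ parts n, (iteratedDeriv π.card h (g t) * ∏ P ∈ π, iteratedDeriv P.card g t) :=
    Finset.sum_filter_add_sum_filter_not _ _ _
  have hsing : ∑ π ∈ (parts n).filter (fun π => ¬ ∃ P ∈ π, 2 ≤ P.card),
        (iteratedDeriv π.card h (g t) * ∏ P ∈ π, iteratedDeriv P.card g t) =
      iteratedDeriv n h (g t) * (deriv g t) ^ n := by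
    rw [filter_not_eq, Finset.sum_singleton, card_singPart,
      prod_singPart (fun k => iteratedDeriv k g t), iteratedDeriv_one]
  have hset : (Finset.univ : Finset (Finset (Finset (Fin n)))).filter
      (fun π => (∀ P ∈ π, P.Nonempty) ∧
        (∀ P ∈ π, ∀ Q ∈ π, P ≠ Q → Disjoint P Q) ∧
        (∀ i : Fin n, ∃ P ∈ π, i ∈ P) ∧
        (∃ P ∈ π, 2 ≤ P.card)) = (parts n).filter (fun π => ∃ P ∈ π, 2 ≤ P.card) := by
    ext σ
    simp only [Finset.mem_filter, Finset.mem_univ, true_and, mem_parts, isPart]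
    tauto
  rw [hset]
  have heq : (∑ π ∈ (parts n).filter (fun π => ∃ P ∈ π, 2 ≤ P.card),
        (iteratedDeriv π.card h (g t) * ∏ P ∈ π, iteratedDeriv P.card g t)) +
      iteratedDeriv n h (g t) * (deriv g t) ^ n = 0 := by
    rw [← hsing, hsplit]
    exact hzero.symm
  have hpow : (deriv g t) ^ (-(n : ℤ)) = ((deriv g t) ^ n)⁻¹ := by
    rw [zpow_neg, zpow_natCast]
  rw [hpow]
  have hB : (deriv g t) ^ n ≠ 0 := pow_ne_zero n hgt
  field_simp
  linarith [heq]
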